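/- arXiv:2411.19018 — 5 statements merged into one kernel-verified Lean document; each statement's English description precedes it below -/
import Mathlib

section
/- Let φ : (ℂˣ)^m → (ℂˣ)^n be a monomial map with matrix M ∈ ℤ^{n×m}, let X ⊆ (ℂˣ)^m be any subset, and let Y be the closure of φ(X) in (ℂˣ)^n. Then the phase limit set of Y is contained in the image of the phase limit set of X: 𝒫∞(Y) ⊆ φ_𝕋(𝒫∞(X)). (Proposition 1.3(4).) -/
open Filter Topology

/-- `Arg : (ℂˣ)^n → 𝕋^n`, the coordinatewise argument `z_i ↦ z_i/|z_i|`. -/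
noncomputable def ArgMap {ι : Type*} (z : ι → ℂ) : ι → ℂ :=
  fun i => z i / (‖z i‖ : ℂ)

/-- `Log : (ℂˣ)^n → ℝ^n`, the coordinatewise logarithm of absolute value. -/
noncomputable def LogMap {n : ℕ} (z : Fin n → ℂ) : Fin n → ℝ :=
  fun i => Real.log ‖z i‖

/-- The complex torus `(ℂˣ)^n` inside `ℂ^n`. -/
def torus (n : ℕ) : Set (Fin n → ℂ) := {z | ∀ i, z i ≠ 0}

/-- The monomial map with exponent matrix `M`; on `𝕋^m` this is the induced map `φ_𝕋`. -/
noncomputable def monomialMap {m n : ℕ} (M : Matrix (Fin n) (Fin m) ℤ)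
    (z : Fin m → ℂ) : Fin n → ℂ :=
  fun i => ∏ j, z j ^ (M i j)

/-- The phase limit set `𝒫∞(X)` of `X ⊆ (ℂˣ)^n`: limits of arguments of sequences in `X`
whose `Log`-norms tend to infinity. -/
noncomputable def phaseLimit {n : ℕ} (X : Set (Fin n → ℂ)) : Set (Fin n → ℂ) :=
  {θ | ∃ x : ℕ → Fin n → ℂ, (∀ k, x k ∈ X) ∧
    Tendsto (fun k => ‖LogMap (x k)‖) atTop atTop ∧
    Tendsto (fun k => ArgMap (x k)) atTop (𝓝 θ)}

lemma argMap_monomialMap {m n : ℕ} (M : Matrix (Fin n) (Fin m) ℤ) (x : Fin m → ℂ) :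
    ArgMap (monomialMap M x) = monomialMap M (ArgMap x) := by
  funext i
  simp [ArgMap, monomialMap, Complex.norm_prod, Complex.norm_zpow, map_prod, map_zpow₀, div_zpow, Finset.prod_div_distrib,
    Complex.ofReal_prod, Complex.ofReal_zpow]

lemma logMap_monomialMap {m n : ℕ} (M : Matrix (Fin n) (Fin m) ℤ) {x : Fin m → ℂ}
    (hx : x ∈ torus m) :
    LogMap (monomialMap M x) = (M.map (Int.cast : ℤ → ℝ)).mulVec (LogMap x) := by
  funext i
  have h : ∀ j ∈ Finset.univ, ‖x j‖ ^ (M i j) ≠ 0 := fun j _ =>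
    zpow_ne_zero _ (by simpa using hx j)
  simp only [LogMap, monomialMap, Complex.norm_prod, Complex.norm_zpow, Matrix.mulVec, dotProduct,
    Matrix.map_apply, Real.log_prod h, Real.log_zpow]

lemma argMap_continuousAt {n : ℕ} {y : Fin n → ℂ} (hy : y ∈ torus n) :
    ContinuousAt (ArgMap : (Fin n → ℂ) → (Fin n → ℂ)) y := by
  apply continuousAt_pi.2
  intro i
  have h1 : ContinuousAt (fun z : Fin n → ℂ => z i) y := continuousAt_apply i y
  exact h1.div
    ((Complex.continuous_ofReal.continuousAt).comp
      ((continuous_norm.continuousAt).comp h1))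
    (by simpa using hy i)

lemma logMap_continuousAt {n : ℕ} {y : Fin n → ℂ} (hy : y ∈ torus n) :
    ContinuousAt (LogMap : (Fin n → ℂ) → (Fin n → ℝ)) y := by
  apply continuousAt_pi.2
  intro i
  have h1 : ContinuousAt (fun z : Fin n → ℂ => z i) y := continuousAt_apply i y
  exact (Real.continuousAt_log (by simpa using hy i)).comp
    ((continuous_norm.continuousAt).comp h1)

lemma monomialMap_continuousAt {m n : ℕ} (M : Matrix (Fin n) (Fin m) ℤ)
    {ψ : Fin m → ℂ} (hψ : ∀ j, ψ j ≠ 0) :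
    ContinuousAt (monomialMap M) ψ := by
  apply continuousAt_pi.2
  intro i
  show Tendsto (fun z : Fin m → ℂ => ∏ j, z j ^ (M i j)) (𝓝 ψ) (𝓝 (∏ j, ψ j ^ (M i j)))
  exact tendsto_finset_prod _ fun j _ =>
    Tendsto.comp (continuousAt_zpow₀ (ψ j) (M i j) (Or.inl (hψ j))) (continuousAt_apply j ψ)

/-- If `φ` is the monomial map with matrix `M`, `X ⊆ (ℂˣ)^m` any subset,
and `Y` the closure of `φ(X)` in `(ℂˣ)^n`, then `𝒫∞(Y) ⊆ φ_𝕋(𝒫∞(X))`. -/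
theorem stmt4 {m n : ℕ} (M : Matrix (Fin n) (Fin m) ℤ)
    (X : Set (Fin m → ℂ)) (hX : X ⊆ torus m)
    (Y : Set (Fin n → ℂ))
    (hY : Y = closure (monomialMap M '' X) ∩ torus n) :
    phaseLimit Y ⊆ monomialMap M '' phaseLimit X := by
  intro θ hθ
  obtain ⟨y, hyY, hyLog, hyArg⟩ := hθ
  rw [hY] at hyY
  -- select approximating points in X
  have hxsel : ∀ k : ℕ, ∃ x, x ∈ X ∧
      dist (ArgMap (monomialMap M x)) (ArgMap (y k)) < 1 / (k + 1) ∧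
      ‖LogMap (y k)‖ - 1 < ‖LogMap (monomialMap M x)‖ := by
    intro k
    have hyt : y k ∈ torus n := (hyY k).2
    have hcl : y k ∈ closure (monomialMap M '' X) := (hyY k).1
    have h1 : {z : Fin n → ℂ | dist (ArgMap z) (ArgMap (y k)) < 1 / (k + 1)} ∈ 𝓝 (y k) :=
      (argMap_continuousAt hyt).preimage_mem_nhds
        (Metric.ball_mem_nhds _ (by positivity))
    have h2 : {z : Fin n → ℂ | ‖LogMap (y k)‖ - 1 < ‖LogMap z‖} ∈ 𝓝 (y k) :=
      ((logMap_continuousAt hyt).norm).preimage_mem_nhds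
        (Ioi_mem_nhds (by linarith))
    obtain ⟨z, hzU, hzim⟩ := mem_closure_iff_nhds.mp hcl _ (Filter.inter_mem h1 h2)
    obtain ⟨x, hxX, rfl⟩ := hzim
    exact ⟨x, hxX, hzU.1, hzU.2⟩
  choose x hx1 hx2 hx3 using hxsel
  -- the log norms of x k go to infinity
  set f : (Fin m → ℝ) →L[ℝ] (Fin n → ℝ) :=
    LinearMap.toContinuousLinearMap ((M.map (Int.cast : ℤ → ℝ)).mulVecLin) with hf
  have hfeq : ∀ k, LogMap (monomialMap M (x k)) = f (LogMap (x k)) := fun k =>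
    logMap_monomialMap M (hX (hx1 k))
  have hdiv : Tendsto (fun k => ‖LogMap (monomialMap M (x k))‖) atTop atTop := by
    refine tendsto_atTop_mono (fun k => (hx3 k).le) ?_
    simpa [sub_eq_add_neg] using tendsto_atTop_add_const_right atTop (-1) hyLog
  have hC : (0 : ℝ) < ‖f‖ + 1 := by positivity
  have hLx : Tendsto (fun k => ‖LogMap (x k)‖) atTop atTop := by
    refine tendsto_atTop_mono (fun k => ?_) (hdiv.atTop_div_const hC)
    rw [div_le_iff₀ hC, hfeq k]
    calc ‖f (LogMap (x k))‖ ≤ ‖f‖ * ‖LogMap (x k)‖ := f.le_opNorm _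
      _ ≤ ‖LogMap (x k)‖ * (‖f‖ + 1) := by nlinarith [norm_nonneg (LogMap (x k)), norm_nonneg f]
  -- the arguments of φ(x k) converge to θ
  have hargle : Tendsto (fun k => ArgMap (monomialMap M (x k))) atTop (𝓝 θ) := by
    rw [tendsto_iff_dist_tendsto_zero]
    refine squeeze_zero (g := fun k : ℕ => 1 / (k + 1) + dist (ArgMap (y k)) θ) (fun k => dist_nonneg) (fun k => ?_) ?_
    · calc dist (ArgMap (monomialMap M (x k))) θ
          ≤ dist (ArgMap (monomialMap M (x k))) (ArgMap (y k)) + dist (ArgMap (y k)) θ :=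
            dist_triangle _ _ _
        _ ≤ 1 / (k + 1) + dist (ArgMap (y k)) θ := by linarith [hx2 k]
    · have h1 : Tendsto (fun k : ℕ => 1 / ((k : ℝ) + 1)) atTop (𝓝 0) :=
        tendsto_one_div_add_atTop_nhds_zero_nat
      have h2 : Tendsto (fun k => dist (ArgMap (y k)) θ) atTop (𝓝 0) :=
        tendsto_iff_dist_tendsto_zero.mp hyArg
      simpa using h1.add h2
  -- compactness of the phase torus
  have hScomp : IsCompact (Set.pi Set.univ fun _ : Fin m => Metric.sphere (0 : ℂ) 1) :=
    isCompact_univ_pi fun _ => isCompact_sphere 0 1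
  have hmemS : ∀ k, ArgMap (x k) ∈ Set.pi Set.univ fun _ : Fin m => Metric.sphere (0 : ℂ) 1 := by
    intro k
    rw [Set.mem_univ_pi]
    intro i
    have hne : ‖x k i‖ ≠ 0 := by simpa using hX (hx1 k) i
    simp [ArgMap, mem_sphere_zero_iff_norm, norm_div, Complex.norm_real,
      norm_norm, div_self hne]
  obtain ⟨ψ, hψS, σ, hσ, hψlim⟩ := hScomp.tendsto_subseq hmemS
  have hψne : ∀ j, ψ j ≠ 0 := by
    intro j
    have := hψS j (Set.mem_univ j)
    rw [mem_sphere_zero_iff_norm] at this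
    exact fun h => by simp [h] at this
  have hφlim : Tendsto (fun j => ArgMap (monomialMap M (x (σ j)))) atTop
      (𝓝 (monomialMap M ψ)) := by
    have := ((monomialMap_continuousAt M hψne).tendsto).comp hψlim
    refine this.congr fun j => ?_
    exact (argMap_monomialMap M (x (σ j))).symm
  have hφlim' : Tendsto (fun j => ArgMap (monomialMap M (x (σ j)))) atTop (𝓝 θ) :=
    hargle.comp hσ.tendsto_atTop
  refine ⟨ψ, ⟨fun j => x (σ j), fun j => hx1 (σ j), hLx.comp hσ.tendsto_atTop, hψlim⟩,
    tendsto_nhds_unique hφlim hφlim'⟩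
end

section
/- Let V ⊆ ℂ^n be a ℂ-linear subspace not contained in any coordinate hyperplane, and let x ∈ V ∖ {0}. Set F := {i : x_i = 0}; then F is a flat of V, with flat subspace L = L_F (the minimal flat subspace containing x). The set of θ ∈ 𝕋^n for which there exists a sequence (x_k) ⊆ V ∩ (ℂˣ)^n with x_k → x and Arg(x_k) → θ equals the product cl(Arg(π_F(V) ∩ (ℂˣ)^F)) × {Arg(π_{F^c}(x))} ⊆ 𝕋^F × 𝕋^{F^c} = 𝕋^n. (These are exactly the points of the phase limit set of ℋ^c = V ∩ (ℂˣ)^n that correspond to x; Lemma 2.2.) -/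
open Filter Topology

lemma tendsto_arg_aux {f : ℕ → ℂ} {a : ℂ} (ha : a ≠ 0) (hf : Tendsto f atTop (𝓝 a)) :
    Tendsto (fun m => f m / (‖f m‖ : ℂ)) atTop (𝓝 (a / (‖a‖ : ℂ))) := by
  have hc : ContinuousAt (fun z : ℂ => z / (‖z‖ : ℂ)) a := by
    apply ContinuousAt.div continuousAt_id
      ((Complex.continuous_ofReal.comp continuous_norm).continuousAt)
    exact Complex.ofReal_ne_zero.mpr (norm_ne_zero_iff.mpr ha)
  exact hc.tendsto.comp hf

lemma arg_smul_aux {ε : ℝ} (hε : 0 < ε) (z : ℂ) :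
    (ε : ℂ) * z / (‖(ε : ℂ) * z‖ : ℂ) = z / (‖z‖ : ℂ) := by
  rw [norm_mul, Complex.norm_real, Real.norm_eq_abs, abs_of_pos hε, Complex.ofReal_mul,
    mul_div_mul_left _ _ (by exact_mod_cast hε.ne')]

/-- Let `V ⊆ ℂ^n` be a linear subspace contained in no coordinate
hyperplane and `x ∈ V ∖ {0}`.  Set `F := {i : x_i = 0}`.  Then `F` is a flat of `V`, and
the set of `θ ∈ 𝕋^n` which are limits of `Arg(x_k)` for sequences `(x_k) ⊆ V ∩ (ℂˣ)^n`
converging to `x` equals the product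
`cl(Arg(π_F(V) ∩ (ℂˣ)^F)) × {Arg(π_{F^c}(x))} ⊆ 𝕋^F × 𝕋^{F^c} = 𝕋^n`. -/
theorem stmt5 {n : ℕ} (V : Submodule ℂ (Fin n → ℂ))
    (hV : ∀ i, ∃ v ∈ V, v i ≠ 0)
    (x : Fin n → ℂ) (hxV : x ∈ V) (hx0 : x ≠ 0)
    (F : Set (Fin n)) (hF : F = {i | x i = 0}) :
    F = {i | ∀ v ∈ V, (∀ j ∈ F, v j = 0) → v i = 0} ∧
    {θ : Fin n → ℂ | ∃ xk : ℕ → Fin n → ℂ,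
        (∀ k, xk k ∈ V ∧ ∀ i, xk k i ≠ 0) ∧
        Tendsto xk atTop (𝓝 x) ∧
        Tendsto (fun k => ArgMap (xk k)) atTop (𝓝 θ)} =
      {θ : Fin n → ℂ |
        (fun i : F => θ i) ∈
          closure (ArgMap ''
            {w : F → ℂ | ∃ v ∈ V, (∀ i : F, w i = v i) ∧ ∀ i ∈ F, v i ≠ 0}) ∧
        ∀ i ∉ F, θ i = x i / (‖x i‖ : ℂ)} := by
  subst hF
  constructor
  · ext i
    simp only [Set.mem_setOf_eq]
    constructor
    · intro hi v _ hvF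
      exact hvF i hi
    · intro h
      exact h x hxV (fun j hj => hj)
  · have hn : Nonempty (Fin n) := by
      rcases Nat.eq_zero_or_pos n with h | h
      · subst h; exact absurd (funext fun i => i.elim0) hx0
      · exact ⟨⟨0, h⟩⟩
    ext θ
    simp only [Set.mem_setOf_eq]
    constructor
    · rintro ⟨xk, hxk, hlim, harg⟩
      refine ⟨?_, ?_⟩
      · apply mem_closure_of_tendsto
          (f := fun k => ArgMap (fun i : {i | x i = 0} => xk k i)) (b := atTop)
        · refine tendsto_pi_nhds.mpr fun i => ?_
          exact tendsto_pi_nhds.mp harg i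
        · refine Eventually.of_forall fun k => ⟨fun i : {i | x i = 0} => xk k i,
            ⟨xk k, (hxk k).1, fun i => rfl, fun i _ => (hxk k).2 i⟩, rfl⟩
      · intro i hi
        have h1 : Tendsto (fun k => xk k i) atTop (𝓝 (x i)) := tendsto_pi_nhds.mp hlim i
        have h2 := tendsto_arg_aux hi h1
        have h3 : Tendsto (fun k => ArgMap (xk k) i) atTop (𝓝 (θ i)) :=
          tendsto_pi_nhds.mp harg i
        exact tendsto_nhds_unique h3 h2
    · rintro ⟨hcl, hoff⟩
      obtain ⟨w, hw, hwlim⟩ := mem_closure_iff_seq_limit.1 hcl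
      choose a ha hargeq using hw
      choose v hvV hva hvne using ha
      have haeq : ∀ m, a m = fun i : {i | x i = 0} => v m i := fun m => funext (hva m)
      -- minimum of |x i| over nonzero coordinates
      set d : ℝ := Finset.univ.inf' Finset.univ_nonempty
        (fun i => if x i = 0 then 1 else ‖x i‖) with hd
      have hd0 : 0 < d := by
        rw [hd, Finset.lt_inf'_iff]
        intro i _
        by_cases h : x i = 0
        · simp [h]
        · simp [h, norm_pos_iff.mpr h]
      have hdle : ∀ i, x i ≠ 0 → d ≤ ‖x i‖ := by
        intro i hi
        have := Finset.inf'_le (f := fun i => if x i = 0 then 1 else ‖x i‖)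
          (Finset.mem_univ i)
        rw [← hd] at this
        simpa [hi] using this
      set ε : ℕ → ℝ := fun m => min ((m : ℝ) + 1)⁻¹ (d / 2) / (‖v m‖ + 1) with hεdef
      have hvpos : ∀ m, (0 : ℝ) < ‖v m‖ + 1 := fun m => by positivity
      have hεpos : ∀ m, 0 < ε m := fun m => by
        apply div_pos _ (hvpos m)
        exact lt_min (by positivity) (by positivity)
      have hεbound : ∀ m, ε m * (‖v m‖ + 1) = min ((m : ℝ) + 1)⁻¹ (d / 2) := fun m =>
        div_mul_cancel₀ _ (hvpos m).ne'
      have key : ∀ m i, ‖(ε m : ℂ) * v m i‖ ≤ min ((m : ℝ) + 1)⁻¹ (d / 2) := by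
        intro m i
        rw [norm_mul, Complex.norm_real, Real.norm_eq_abs, abs_of_pos (hεpos m)]
        calc ε m * ‖v m i‖ ≤ ε m * (‖v m‖ + 1) := by
              have h1 : ‖v m i‖ ≤ ‖v m‖ := by
                simpa using norm_le_pi_norm (v m) i
              have := (hεpos m).le
              nlinarith
          _ = _ := hεbound m
      set xk : ℕ → Fin n → ℂ := fun m => x + ((ε m : ℂ) • v m) with hxkdef
      have hxkval : ∀ m i, xk m i = x i + (ε m : ℂ) * v m i := fun m i => rfl
      have hmem : ∀ m, xk m ∈ V := fun m =>
        V.add_mem hxV (V.smul_mem _ (hvV m))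
      have hne : ∀ m i, xk m i ≠ 0 := by
        intro m i
        by_cases hi : x i = 0
        · rw [hxkval, hi, zero_add]
          exact mul_ne_zero (Complex.ofReal_ne_zero.mpr (hεpos m).ne') (hvne m i hi)
        · intro hcontra
          rw [hxkval] at hcontra
          have : x i = -((ε m : ℂ) * v m i) := by linear_combination hcontra
          have habs : ‖x i‖ = ‖(ε m : ℂ) * v m i‖ := by
            rw [this, norm_neg]
          have h1 := key m i
          have h2 := hdle i hi
          have : ‖x i‖ ≤ d / 2 := habs ▸ (h1.trans (min_le_right _ _))
          linarith
      have hxklim : Tendsto xk atTop (𝓝 x) := by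
        rw [tendsto_iff_norm_sub_tendsto_zero]
        have hb : ∀ m, ‖xk m - x‖ ≤ ((m : ℝ) + 1)⁻¹ := by
          intro m
          have : xk m - x = (ε m : ℂ) • v m := by rw [hxkdef]; ring
          rw [this, norm_smul]
          have h1 : ‖(ε m : ℂ)‖ = ε m := by
            rw [Complex.norm_real, Real.norm_eq_abs, abs_of_pos (hεpos m)]
          rw [h1]
          calc ε m * ‖v m‖ ≤ ε m * (‖v m‖ + 1) := by nlinarith [(hεpos m).le]
            _ = min ((m : ℝ) + 1)⁻¹ (d / 2) := hεbound m
            _ ≤ _ := min_le_left _ _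
        refine squeeze_zero (fun m => norm_nonneg _) hb ?_
        exact tendsto_one_div_add_atTop_nhds_zero_nat.congr (fun m => by rw [one_div])
      refine ⟨xk, fun m => ⟨hmem m, hne m⟩, hxklim, ?_⟩
      refine tendsto_pi_nhds.mpr fun i => ?_
      by_cases hi : x i = 0
      · have hco : Tendsto (fun m => w m ⟨i, hi⟩) atTop (𝓝 (θ i)) :=
          tendsto_pi_nhds.mp hwlim ⟨i, hi⟩
        refine hco.congr fun m => ?_
        have h1 : w m ⟨i, hi⟩ = v m i / (‖v m i‖ : ℂ) := by
          rw [← hargeq m, haeq m]; rfl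
        have h2 : ArgMap (xk m) i = w m ⟨i, hi⟩ := by
          rw [h1]
          show xk m i / (‖xk m i‖ : ℂ) = _
          rw [hxkval, hi, zero_add, arg_smul_aux (hεpos m)]
        exact h2.symm
      · have h1 : Tendsto (fun m => xk m i) atTop (𝓝 (x i)) := tendsto_pi_nhds.mp hxklim i
        have h2 := tendsto_arg_aux hi h1
        rw [hoff i hi]
        exact h2
end

section
/- With A = (a_1,…,a_n) spanning ℤ^m, lying on an affine hyperplane, and B = (b_1,…,b_n) ⊆ ℤ^d a Gale dual (d = n − m), let X*_A ⊆ ℂ^n be the closure of {(x^{a_j}·⟨b_j,y⟩)_j : x ∈ (ℂˣ)^m, y ∈ ℂ^d} (the dual variety), and let 𝕋_A := {(x^{a_1},…,x^{a_n}) : x ∈ 𝕋^m} ⊆ 𝕋^n. Then the closed coamoeba of X*_A ∩ (ℂˣ)^n is cl(Arg(X*_A ∩ (ℂˣ)^n)) = 𝕋_A · cl(Arg(ℋ^c_B)), the set of products of elements of the subtorus 𝕋_A with elements of the closed coamoeba of the hyperplane complement ℋ^c_B = λ_B(ℂ^d) ∩ (ℂˣ)^n. (Corollary 3.4, first part.)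 -/
open Filter Topology

/-- `λ_B : ℂ^d → ℂ^n`, `y ↦ (⟨b_j, y⟩)_j`. -/
noncomputable def lamB {d n : ℕ} (b : Fin n → Fin d → ℤ) (y : Fin d → ℂ) : Fin n → ℂ :=
  fun j => ∑ k, (b j k : ℂ) * y k

/-- `x ↦ (x^{a_j})_j`, the monomial parameterization of the torus `Y_A`. -/
noncomputable def xPow {m n : ℕ} (a : Fin n → Fin m → ℤ) (x : Fin m → ℂ) : Fin n → ℂ :=
  fun j => ∏ i, x i ^ (a j i)

/-! ### Auxiliary lemmas -/

noncomputable def uu (z : ℂ) : ℂ := z / (‖z‖ : ℂ)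

lemma uu_mul (z w : ℂ) : uu (z * w) = uu z * uu w := by
  unfold uu; rw [norm_mul]; push_cast; rw [div_mul_div_comm]

noncomputable def uuHom : ℂ →* ℂ where
  toFun := uu
  map_one' := by simp [uu]
  map_mul' := uu_mul

lemma uu_zpow (z : ℂ) (k : ℤ) : uu (z ^ k) = (uu z) ^ k := by
  unfold uu; rw [norm_zpow]; push_cast; rw [div_zpow]

lemma uu_eq_self {z : ℂ} (h : ‖z‖ = 1) : uu z = z := by simp [uu, h]

lemma abs_uu {z : ℂ} (h : z ≠ 0) : ‖uu z‖ = 1 := by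
  rw [uu, norm_div, Complex.norm_real, Real.norm_eq_abs, abs_of_nonneg (norm_nonneg z),
    div_self (by simpa using h)]

lemma continuousAt_uu {z : ℂ} (h : z ≠ 0) : ContinuousAt uu z := by
  apply ContinuousAt.div continuousAt_id
    ((Complex.continuous_ofReal.comp continuous_norm).continuousAt)
  simpa using h

lemma argMap_apply {ι : Type*} (z : ι → ℂ) (i : ι) : ArgMap z i = uu (z i) := rfl

lemma continuousAt_argMap {n : ℕ} {z : Fin n → ℂ} (h : ∀ j, z j ≠ 0) :
    ContinuousAt (ArgMap : (Fin n → ℂ) → Fin n → ℂ) z := by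
  refine continuousAt_pi.mpr fun i => ?_
  show ContinuousAt (uu ∘ fun w : Fin n → ℂ => w i) z
  exact ContinuousAt.comp (x := z) (continuousAt_uu (h i)) ((continuous_apply i).continuousAt)

lemma uu_xPow {m n : ℕ} (a : Fin n → Fin m → ℤ) (x : Fin m → ℂ) (j : Fin n) :
    uu (xPow a x j) = xPow a (fun i => uu (x i)) j := by
  unfold xPow
  rw [show uu (∏ i, x i ^ a j i) = uuHom (∏ i, x i ^ a j i) from rfl, map_prod]
  exact Finset.prod_congr rfl fun i _ => uu_zpow _ _

lemma xPow_ne_zero {m n : ℕ} (a : Fin n → Fin m → ℤ) {x : Fin m → ℂ}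
    (h : ∀ i, x i ≠ 0) (j : Fin n) : xPow a x j ≠ 0 :=
  Finset.prod_ne_zero_iff.mpr fun i _ => zpow_ne_zero _ (h i)

lemma abs_xPow_one {m n : ℕ} (a : Fin n → Fin m → ℤ) {x : Fin m → ℂ}
    (h : ∀ i, ‖x i‖ = 1) (j : Fin n) : ‖xPow a x j‖ = 1 := by
  unfold xPow
  rw [norm_prod]
  simp [norm_zpow, h]

lemma isCompact_torus (n : ℕ) : IsCompact {x : Fin n → ℂ | ∀ i, ‖x i‖ = 1} := by
  have : {x : Fin n → ℂ | ∀ i, ‖x i‖ = 1} =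
      Set.univ.pi (fun _ : Fin n => Metric.sphere (0 : ℂ) 1) := by
    ext x; simp [Set.mem_univ_pi, Complex.dist_eq]
  rw [this]
  exact isCompact_univ_pi fun _ => isCompact_sphere 0 1

lemma isCompact_K {m n : ℕ} (a : Fin n → Fin m → ℤ) :
    IsCompact {t : Fin n → ℂ | ∃ x : Fin m → ℂ, (∀ i, ‖x i‖ = 1) ∧ t = xPow a x} := by
  have himg : {t : Fin n → ℂ | ∃ x : Fin m → ℂ, (∀ i, ‖x i‖ = 1) ∧ t = xPow a x}
      = xPow a '' {x : Fin m → ℂ | ∀ i, ‖x i‖ = 1} := by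
    ext t; constructor
    · rintro ⟨x, hx, rfl⟩; exact ⟨x, hx, rfl⟩
    · rintro ⟨x, hx, rfl⟩; exact ⟨x, hx, rfl⟩
  rw [himg]
  apply (isCompact_torus m).image_of_continuousOn
  intro x hx
  apply ContinuousAt.continuousWithinAt
  apply continuousAt_pi.mpr
  intro j
  apply tendsto_finset_prod
  intro i _
  have hxi : x i ≠ 0 := by
    intro hz
    have := hx i
    rw [hz] at this; simp at this
  exact ((continuous_apply i).continuousAt).zpow₀ _ (Or.inl hxi)

/-- **Corollary 3.4, first part.** With `A` spanning `ℤ^m`, lying on an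
affine hyperplane, and `B` a Gale dual, let `X*_A` be the dual variety (the closure of the
image of `(x,y) ↦ (x^{a_j}⟨b_j,y⟩)_j`) and `𝕋_A := Arg(Y_A)` the compact subtorus
`{(x^{a_j})_j : x ∈ 𝕋^m}`.  Then
`cl(Arg(X*_A ∩ (ℂˣ)^n)) = 𝕋_A · cl(Arg(ℋ^c_B))`. -/
theorem stmt12 {m d n : ℕ} (hn : n = m + d)
    (a : Fin n → Fin m → ℤ)
    (hspan : Submodule.span ℤ (Set.range a) = ⊤)
    (u : Fin m → ℤ) (hu : ∀ j, ∑ i, u i * a j i = 1)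
    (b : Fin n → Fin d → ℤ)
    (hinj : Function.Injective (lamB b))
    (hker : Set.range (lamB b) = {c : Fin n → ℂ | ∀ i, ∑ j, c j * (a j i : ℂ) = 0})
    (Xdual : Set (Fin n → ℂ))
    (hXdual : Xdual = closure {c : Fin n → ℂ | ∃ x : Fin m → ℂ, (∀ i, x i ≠ 0) ∧
      ∃ y : Fin d → ℂ, c = fun j => xPow a x j * lamB b y j}) :
    closure (ArgMap '' (Xdual ∩ {z | ∀ j, z j ≠ 0})) =
      Set.image2 (fun t h => t * h)
        {t : Fin n → ℂ | ∃ x : Fin m → ℂ, (∀ i, ‖x i‖ = 1) ∧ t = xPow a x}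
        (closure (ArgMap ''
          {z : Fin n → ℂ | ∃ y : Fin d → ℂ, (∀ j, lamB b y j ≠ 0) ∧ z = lamB b y})) := by
  classical
  set S : Set (Fin n → ℂ) := {c : Fin n → ℂ | ∃ x : Fin m → ℂ, (∀ i, x i ≠ 0) ∧
      ∃ y : Fin d → ℂ, c = fun j => xPow a x j * lamB b y j} with hS
  set T : Set (Fin n → ℂ) := {z | ∀ j, z j ≠ 0} with hT
  set K : Set (Fin n → ℂ) :=
    {t : Fin n → ℂ | ∃ x : Fin m → ℂ, (∀ i, ‖x i‖ = 1) ∧ t = xPow a x} with hK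
  set H : Set (Fin n → ℂ) := ArgMap ''
    {z : Fin n → ℂ | ∃ y : Fin d → ℂ, (∀ j, lamB b y j ≠ 0) ∧ z = lamB b y} with hH
  -- Step A: the argument image of the parametrized part
  have stepA : ArgMap '' (S ∩ T) = Set.image2 (fun t h => t * h) K H := by
    ext w
    constructor
    · rintro ⟨c, ⟨⟨x, hx, y, rfl⟩, hct⟩, rfl⟩
      have hct' : ∀ j, xPow a x j * lamB b y j ≠ 0 := hct
      have hly : ∀ j, lamB b y j ≠ 0 := fun j h0 => hct' j (by rw [h0, mul_zero])
      refine ⟨xPow a (fun i => uu (x i)), ⟨_, fun i => abs_uu (hx i), rfl⟩,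
        ArgMap (lamB b y), ⟨lamB b y, ⟨y, hly, rfl⟩, rfl⟩, ?_⟩
      funext j
      show xPow a (fun i => uu (x i)) j * uu (lamB b y j)
        = uu (xPow a x j * lamB b y j)
      rw [uu_mul, uu_xPow]
    · rintro ⟨t, ⟨x, hx, rfl⟩, h, ⟨z, ⟨y, hy, rfl⟩, rfl⟩, rfl⟩
      have hx0 : ∀ i, x i ≠ 0 := by
        intro i h0
        have := hx i
        rw [h0] at this; simp at this
      refine ⟨fun j => xPow a x j * lamB b y j,
        ⟨⟨x, hx0, y, rfl⟩, fun j => mul_ne_zero (xPow_ne_zero a hx0 j) (hy j)⟩, ?_⟩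
      funext j
      show uu (xPow a x j * lamB b y j) = xPow a x j * uu (lamB b y j)
      rw [uu_mul, uu_eq_self (abs_xPow_one a hx j)]
  -- Step B: passing to the closure of the parametrized set changes nothing
  have stepB : closure (ArgMap '' (Xdual ∩ T)) = closure (ArgMap '' (S ∩ T)) := by
    apply Set.Subset.antisymm
    · apply closure_minimal _ isClosed_closure
      rintro w ⟨z, ⟨hzX, hzT⟩, rfl⟩
      rw [hXdual] at hzX
      have hzT' : ∀ j, z j ≠ 0 := hzT
      obtain ⟨f, hfS, hft⟩ := mem_closure_iff_seq_limit.mp hzX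
      have hev : ∀ᶠ k in atTop, ∀ j, f k j ≠ 0 :=
        eventually_all.mpr fun j => (tendsto_pi_nhds.mp hft j).eventually_ne (hzT' j)
      exact mem_closure_of_tendsto (((continuousAt_argMap hzT').tendsto).comp hft)
        (hev.mono fun k hk => ⟨f k, ⟨hfS k, hk⟩, rfl⟩)
    · refine closure_mono (Set.image_mono (Set.inter_subset_inter_left _ ?_))
      rw [hXdual]
      exact subset_closure
  -- Step C: compactness lets the closure pass through the product
  have hKc : IsCompact K := isCompact_K a
  have hHsub : closure H ⊆ {x : Fin n → ℂ | ∀ j, ‖x j‖ = 1} := by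
    apply closure_minimal _ (isCompact_torus n).isClosed
    rintro w ⟨z, ⟨y, hy, rfl⟩, rfl⟩ j
    exact abs_uu (hy j)
  have hclH : IsCompact (closure H) :=
    (isCompact_torus n).of_isClosed_subset isClosed_closure hHsub
  have hCclosed : IsClosed (Set.image2 (fun t h : Fin n → ℂ => t * h) K (closure H)) := by
    rw [← Set.image_prod]
    exact ((hKc.prod hclH).image (continuous_fst.mul continuous_snd)).isClosed
  have stepC : closure (Set.image2 (fun t h : Fin n → ℂ => t * h) K H)
      = Set.image2 (fun t h : Fin n → ℂ => t * h) K (closure H) := by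
    apply Set.Subset.antisymm
    · exact closure_minimal (Set.image2_subset Set.Subset.rfl subset_closure) hCclosed
    · rintro w ⟨t, ht, h, hh, rfl⟩
      exact map_mem_closure (continuous_const.mul continuous_id) hh
        (fun x hx => ⟨t, ht, x, hx, rfl⟩)
  rw [stepB, stepA, stepC]
end

section
/- Let J be a finite index set and b : J → ℤ^d nonzero vectors spanning ℝ^d with Σ_{j∈J} b_j = 0. Let F ⊆ J be a flat of B whose flat subspace L = {v ∈ ℂ^d : b_j·v = 0 for all j ∈ F} has complex dimension 1, say L = ℂ·v₀ where b_j·v₀ ≠ 0 for all j ∈ F^c. Then φ_B(ini_L ℋ^c_B) is contained in the single coset g·G_{L⊥}, where g ∈ (ℂˣ)^d is given by g_k := ∏_{j∈F^c} (b_j·v₀)^{(b_j)_k}. Consequently Arg(φ_B(ini_L ℋ^c_B)), and hence the stratum 𝒫∞_L(D_B) := cl(Arg(φ_B(ini_L ℋ^c_B))) of the phase limit set of the discriminant, is contained in a single coset of the subtorus 𝕋_{L⊥} of 𝕋^d (so this stratum has dimension at most d − 1). (Lemma 4.10.) -/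
open Filter Topology

/-- The pairing `b_j · v = Σ_k (b_j)_k v_k`. -/
noncomputable def dotB {d : ℕ} {J : Type*} (b : J → Fin d → ℤ) (j : J) (v : Fin d → ℂ) : ℂ :=
  ∑ k, (b j k : ℂ) * v k

/-- The monomial map `φ_B : (ℂˣ)^J → (ℂˣ)^d`, `φ_B(z)_k = ∏_j z_j^{(b_j)_k}`. -/
noncomputable def phiB {d : ℕ} {J : Type*} [Fintype J] (b : J → Fin d → ℤ) (z : J → ℂ) :
    Fin d → ℂ :=
  fun k => ∏ j, z j ^ (b j k)

/-- The initial scheme `ini_L ℋ^c_B = (ℋ/L)^c × (ℋ|_L)^c ⊆ (ℂˣ)^J` attached to the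
flat `F` (with flat subspace `L = {v : b_j·v = 0 ∀ j ∈ F}`). -/
noncomputable def iniL {d : ℕ} {J : Type*} [Fintype J] (b : J → Fin d → ℤ) (F : Finset J) :
    Set (J → ℂ) :=
  {z | (∃ v : Fin d → ℂ, ∀ j ∈ F, z j = dotB b j v ∧ dotB b j v ≠ 0) ∧
       (∃ w : Fin d → ℂ, (∀ j ∈ F, dotB b j w = 0) ∧
         ∀ j ∉ F, z j = dotB b j w ∧ dotB b j w ≠ 0)}

/-- `L⊥`: the saturation in `ℤ^d` of the `ℤ`-span of `{b_j : j ∈ F}`. -/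
def Lperp {d : ℕ} {J : Type*} (b : J → Fin d → ℤ) (F : Finset J) : Set (Fin d → ℤ) :=
  {m | ∃ c : ℤ, c ≠ 0 ∧ c • m ∈ Submodule.span ℤ (b '' ↑F)}

/-- The generators `(t^{m_1},…,t^{m_d})`, `t ∈ ℂˣ`, `m ∈ Lp`, of the subgroup `G_{L⊥}`. -/
noncomputable def cocharGens {d : ℕ} (Lp : Set (Fin d → ℤ)) : Set (Fin d → ℂ) :=
  {z | ∃ t : ℂ, t ≠ 0 ∧ ∃ m ∈ Lp, z = fun k => t ^ m k}

/-- The subgroup `G_{L⊥} ⊆ (ℂˣ)^d` generated by the cocharacters in `L⊥` (as a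
submonoid closure; it is closed under inverses since `L⊥` is closed under negation). -/
noncomputable def GLperp {d : ℕ} (Lp : Set (Fin d → ℤ)) : Submonoid (Fin d → ℂ) :=
  Submonoid.closure (cocharGens Lp)

/-- The normalized-argument map as a monoid-with-zero hom. -/
noncomputable def argc : ℂ →*₀ ℂ where
  toFun x := x / (‖x‖ : ℂ)
  map_zero' := by simp
  map_one' := by simp
  map_mul' x y := by
    simp only [norm_mul, Complex.ofReal_mul]
    exact (div_mul_div_comm x (‖x‖ : ℂ) y (‖y‖ : ℂ)).symm

lemma abs_argc {x : ℂ} (hx : x ≠ 0) : ‖argc x‖ = 1 := by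
  simp only [argc, MonoidWithZeroHom.coe_mk, ZeroHom.coe_mk, norm_div, Complex.norm_real,
    norm_norm]
  rw [div_self (by simpa using hx)]

lemma ArgMap_eq {ι : Type*} (z : ι → ℂ) : ArgMap z = fun i => argc (z i) := rfl

lemma zpow_sum' {ι : Type*} {s : ℂ} (hs : s ≠ 0) (t : Finset ι) (f : ι → ℤ) :
    s ^ (∑ i ∈ t, f i) = ∏ i ∈ t, s ^ f i := by
  classical
  induction t using Finset.cons_induction with
  | empty => simp
  | cons a t ha ih => simp [Finset.sum_insert ha, Finset.prod_insert ha, zpow_add₀ hs, ih]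

/-- **Lemma 4.10.** Let `b : J → ℤ^d` be nonzero vectors spanning `ℝ^d`
with `Σ_j b_j = 0`, and `F` a flat whose flat subspace `L = ℂ·v₀` is one-dimensional,
with `b_j·v₀ ≠ 0` for all `j ∉ F`.  Then `φ_B(ini_L ℋ^c_B)` lies in the single coset
`g·G_{L⊥}` with `g_k = ∏_{j∉F}(b_j·v₀)^{(b_j)_k}`; consequently the stratum
`𝒫∞_L(D_B) = cl(Arg(φ_B(ini_L ℋ^c_B)))` lies in a single coset of the subtorus
`𝕋_{L⊥} = G_{L⊥} ∩ 𝕋^d`. -/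
theorem stmt15 {d : ℕ} {J : Type*} [Fintype J] [DecidableEq J]
    (b : J → Fin d → ℤ) (hb0 : ∀ j, b j ≠ 0)
    (hspan : Submodule.span ℝ (Set.range fun j => fun k => (b j k : ℝ)) = ⊤)
    (hsum : ∑ j, b j = 0)
    (F : Finset J)
    (hflat : ∀ j, j ∈ F ↔
      (fun k => (b j k : ℚ)) ∈ Submodule.span ℚ ((fun j' => fun k => (b j' k : ℚ)) '' ↑F))
    (v₀ : Fin d → ℂ) (hv₀ : v₀ ≠ 0)
    (hL : {v : Fin d → ℂ | ∀ j ∈ F, dotB b j v = 0} = {v | ∃ s : ℂ, v = s • v₀})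
    (hv₀F : ∀ j ∉ F, dotB b j v₀ ≠ 0)
    (g : Fin d → ℂ)
    (hg : g = fun k => ∏ j ∈ Fᶜ, (dotB b j v₀) ^ (b j k)) :
    (∀ z ∈ iniL b F, phiB b z ∈ (fun h => g * h) '' (GLperp (Lperp b F) : Set (Fin d → ℂ))) ∧
    (∃ θ : Fin d → ℂ, (∀ k, ‖θ k‖ = 1) ∧
      closure (ArgMap '' (phiB b '' iniL b F)) ⊆
        (fun h => θ * h) ''
          ((GLperp (Lperp b F) : Set (Fin d → ℂ)) ∩ {z | ∀ k, ‖z k‖ = 1})) := by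
  classical
  -- b_j ∈ L⊥ for j ∈ F
  have hbF : ∀ j ∈ F, b j ∈ Lperp b F := by
    intro j hj
    refine Set.mem_setOf.mpr ⟨1, one_ne_zero, ?_⟩
    have hbj : b j ∈ b '' (↑F : Set J) := ⟨j, Finset.mem_coe.mpr hj, rfl⟩
    simpa using Submodule.subset_span hbj
  -- membership lemma
  have hmem : ∀ u : J → ℂ, (∀ j ∈ F, u j ≠ 0) →
      (fun k => ∏ j ∈ F, u j ^ b j k) ∈ GLperp (Lperp b F) := by
    intro u hu
    have heq : (fun k => ∏ j ∈ F, u j ^ b j k) = ∏ j ∈ F, (fun k => u j ^ b j k) := by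
      funext k; rw [Finset.prod_apply]
    rw [heq]
    exact Submonoid.prod_mem _ fun j hj =>
      Submonoid.subset_closure ⟨u j, hu j hj, b j, hbF j hj, rfl⟩
  -- complement sum
  have hsumk : ∀ k, (∑ j ∈ Fᶜ, b j k) = -∑ j ∈ F, b j k := by
    intro k
    have h0 : ∑ j, b j k = 0 := by
      have := congrFun hsum k
      simpa [Finset.sum_apply] using this
    have h1 := Finset.sum_add_sum_compl F (fun j => b j k)
    omega
  -- the key factorization identity
  have ident : ∀ (z : J → ℂ) (s : ℂ), s ≠ 0 → (∀ j ∉ F, z j = s * dotB b j v₀) →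
      ∀ k, phiB b z k = g k * ∏ j ∈ F, (z j / s) ^ b j k := by
    intro z s hs hzc k
    have h1 : ∏ j ∈ Fᶜ, z j ^ b j k = (∏ j ∈ Fᶜ, s ^ b j k) * g k := by
      rw [hg, ← Finset.prod_mul_distrib]
      exact Finset.prod_congr rfl fun j hj => by
        rw [hzc j (Finset.mem_compl.mp hj), mul_zpow]
    calc phiB b z k = (∏ j ∈ F, z j ^ b j k) * ∏ j ∈ Fᶜ, z j ^ b j k :=
          (Finset.prod_mul_prod_compl F _).symm
      _ = (∏ j ∈ F, z j ^ b j k) * ((∏ j ∈ Fᶜ, s ^ b j k) * g k) := by rw [h1]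
      _ = g k * ((∏ j ∈ F, z j ^ b j k) * s ^ (∑ j ∈ Fᶜ, b j k)) := by
          rw [← zpow_sum' hs]; ring
      _ = g k * ((∏ j ∈ F, z j ^ b j k) * (∏ j ∈ F, s ^ b j k)⁻¹) := by
          rw [hsumk k, zpow_neg, zpow_sum' hs]
      _ = g k * ∏ j ∈ F, (z j / s) ^ b j k := by
          rw [← Finset.prod_inv_distrib, ← Finset.prod_mul_distrib]
          congr 1
          exact Finset.prod_congr rfl fun j _ => by rw [div_zpow, div_eq_mul_inv]
  -- key structure of points of iniL
  have key : ∀ z ∈ iniL b F, ∃ s : ℂ, s ≠ 0 ∧ (∀ j, z j ≠ 0) ∧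
      ∀ k, phiB b z k = g k * ∏ j ∈ F, (z j / s) ^ b j k := by
    rintro z ⟨⟨v, hv⟩, w, hwF, hwFc⟩
    obtain ⟨s, hws⟩ : ∃ s : ℂ, w = s • v₀ := by
      have hwmem : w ∈ {v : Fin d → ℂ | ∀ j ∈ F, dotB b j v = 0} := hwF
      rw [hL] at hwmem
      exact hwmem
    have hdot : ∀ j, dotB b j w = s * dotB b j v₀ := by
      intro j
      simp only [dotB, hws, Pi.smul_apply, smul_eq_mul, Finset.mul_sum]
      exact Finset.sum_congr rfl fun k _ => by ring
    have hzF : ∀ j ∈ F, z j ≠ 0 := fun j hj => (hv j hj).1 ▸ (hv j hj).2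
    have hzc : ∀ j ∉ F, z j = s * dotB b j v₀ := fun j hj => by
      rw [(hwFc j hj).1, hdot j]
    by_cases hall : ∀ j, j ∈ F
    · refine ⟨1, one_ne_zero, fun j => hzF j (hall j), ident z 1 one_ne_zero ?_⟩
      exact fun j hj => absurd (hall j) hj
    · push_neg at hall
      obtain ⟨j₀, hj₀⟩ := hall
      have hs : s ≠ 0 := by
        have hne : z j₀ ≠ 0 := (hwFc j₀ hj₀).1 ▸ (hwFc j₀ hj₀).2
        rw [hzc j₀ hj₀] at hne
        exact left_ne_zero_of_mul hne
      refine ⟨s, hs, ?_, ident z s hs hzc⟩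
      intro j
      by_cases hj : j ∈ F
      · exact hzF j hj
      · rw [hzc j hj]
        exact mul_ne_zero hs (hv₀F j hj)
  have hgk : ∀ k, g k ≠ 0 := by
    intro k
    rw [hg]
    exact Finset.prod_ne_zero_iff.mpr fun j hj =>
      zpow_ne_zero _ (hv₀F j (Finset.mem_compl.mp hj))
  constructor
  · -- part 1
    intro z hz
    obtain ⟨s, hs, hz0, hid⟩ := key z hz
    refine ⟨fun k => ∏ j ∈ F, (z j / s) ^ b j k,
      hmem _ (fun j _ => div_ne_zero (hz0 j) hs), ?_⟩
    funext k
    simp only [Pi.mul_apply]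
    exact (hid k).symm
  · -- part 2
    set θ : Fin d → ℂ := fun k => argc (g k) with hθ
    set T : Set (J → ℂ) := Set.pi Set.univ (fun _ : J => Metric.sphere (0 : ℂ) 1) with hT
    set Ψ : (J → ℂ) → Fin d → ℂ := fun u k => ∏ j ∈ F, u j ^ b j k with hΨ
    have hmemT : ∀ u : J → ℂ, u ∈ T ↔ ∀ j, ‖u j‖ = 1 := by
      intro u
      simp [hT, Set.mem_pi, mem_sphere_zero_iff_norm]
    have hTc : IsCompact T := isCompact_univ_pi fun _ => isCompact_sphere 0 1
    have hΨc : ContinuousOn Ψ T := by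
      rw [continuousOn_pi]
      intro k
      simp only [hΨ]
      refine continuousOn_finset_prod F fun j _ => ?_
      refine ContinuousOn.zpow₀ (continuous_apply j).continuousOn _ fun u hu => Or.inl ?_
      intro h
      have := (hmemT u).mp hu j
      rw [h] at this
      simp at this
    have hK : IsCompact (Ψ '' T) := hTc.image_of_continuousOn hΨc
    have hC : IsCompact ((fun h => θ * h) '' (Ψ '' T)) :=
      hK.image (continuous_const.mul continuous_id)
    have hsub : ArgMap '' (phiB b '' iniL b F) ⊆ (fun h => θ * h) '' (Ψ '' T) := by
      rintro x ⟨y, ⟨z, hz, rfl⟩, rfl⟩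
      obtain ⟨s, hs, hz0, hid⟩ := key z hz
      refine ⟨Ψ (fun j => argc (z j / s)),
        ⟨fun j => argc (z j / s), (hmemT _).mpr fun j => abs_argc (div_ne_zero (hz0 j) hs), rfl⟩, ?_⟩
      funext k
      simp only [Pi.mul_apply, ArgMap_eq]
      rw [hid k, map_mul, map_prod]
      simp_rw [map_zpow₀]
      rfl
    have hKsub : Ψ '' T ⊆ (GLperp (Lperp b F) : Set (Fin d → ℂ)) ∩
        {z | ∀ k, ‖z k‖ = 1} := by
      rintro x ⟨u, hu, rfl⟩
      have hu1 := (hmemT u).mp hu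
      refine ⟨hmem u fun j _ => by intro h; have h2 := hu1 j; rw [h] at h2; simp at h2, ?_⟩
      intro k
      show ‖∏ j ∈ F, u j ^ b j k‖ = 1
      rw [norm_prod]
      exact Finset.prod_eq_one fun j _ => by rw [norm_zpow, hu1 j, one_zpow]
    refine ⟨θ, fun k => abs_argc (hgk k), ?_⟩
    exact (closure_minimal hsub hC.isClosed).trans (Set.image_mono hKsub)
end

section
/- Let J be a finite index set and b : J → ℤ^d nonzero vectors spanning ℝ^d with Σ_{j∈J} b_j = 0. Let η ∈ ℤ^d be primitive with F := {j ∈ J : b_j ∈ ℚ·η} nonempty; write b_j = q_j·η (q_j ∈ ℤ∖{0}) for j ∈ F, and suppose Σ_{j∈F} q_j ≠ 0, i.e. the hyperplane H := {v ∈ ℂ^d : η·v = 0} of ℋ_B is non-splitting. Let 𝕋_η := {(u^{η_1},…,u^{η_d}) : u ∈ 𝕋} ⊆ 𝕋^d and ψ_H(v) := (∏_{j∉F} (b_j·v)^{(b_j)_k})_k for v ∈ H with b_j·v ≠ 0 for all j ∉ F. Then cl(Arg(φ_B(ini_H ℋ^c_B))) = 𝕋_η · cl(Arg({ψ_H(v)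 : v ∈ H, b_j·v ≠ 0 for all j ∉ F})): the stratum 𝒫∞_H(D_B) of the phase limit set of the reduced discriminant corresponding to H is the prism with fiber 𝕋_η over the closed coamoeba of the restricted discriminant D_{B|H}. (Theorem 4.3, hyperplane case.) -/
open Filter Topology

/-- A primitive integer vector. -/
def Primitive {d : ℕ} (η : Fin d → ℤ) : Prop :=
  η ≠ 0 ∧ ∀ (c : ℤ) (η' : Fin d → ℤ), η = c • η' → IsUnit c

/-! ### Auxiliary lemmas -/

noncomputable def carg (z : ℂ) : ℂ := z / (‖z‖ : ℂ)

lemma ArgMap_apply {ι : Type*} (z : ι → ℂ) (i : ι) : ArgMap z i = carg (z i) := rfl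

lemma carg_one : carg 1 = 1 := by simp [carg]

lemma carg_mul (x y : ℂ) : carg (x * y) = carg x * carg y := by
  unfold carg; rw [norm_mul, Complex.ofReal_mul, mul_div_mul_comm]

lemma carg_zpow (x : ℂ) (n : ℤ) : carg (x ^ n) = carg x ^ n := by
  unfold carg; rw [norm_zpow, Complex.ofReal_zpow, div_zpow]

lemma carg_of_abs_one {x : ℂ} (h : ‖x‖ = 1) : carg x = x := by
  simp [carg, h]

lemma abs_carg {x : ℂ} (hx : x ≠ 0) : ‖carg x‖ = 1 := by
  simp [carg, norm_div, hx]

lemma zpow_sum₀' {α : Type*} {x : ℂ} (hx : x ≠ 0) (s : Finset α) (f : α → ℤ) :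
    x ^ (∑ i ∈ s, f i) = ∏ i ∈ s, x ^ f i := by
  classical
  induction s using Finset.induction with
  | empty => simp
  | insert a s h ih => rw [Finset.sum_insert h, Finset.prod_insert h, zpow_add₀ hx, ih]

lemma exists_zpow_eq' {y : ℂ} (hy : y ≠ 0) {n : ℤ} (hn : n ≠ 0) :
    ∃ x : ℂ, x ≠ 0 ∧ x ^ n = y := by
  rcases lt_or_gt_of_ne hn with h | h
  · obtain ⟨x, hx⟩ := IsAlgClosed.exists_pow_nat_eq y⁻¹ (n := (-n).toNat) (by omega)
    have hx0 : x ≠ 0 := by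
      intro h0; rw [h0, zero_pow (by omega)] at hx; exact hy (by simpa using hx.symm)
    refine ⟨x, hx0, ?_⟩
    have h1 : x ^ ((-n).toNat : ℤ) = y⁻¹ := by rw [zpow_natCast, hx]
    have h2 : x ^ (-n) = y⁻¹ := by rwa [show ((-n).toNat : ℤ) = -n by omega] at h1
    rw [show n = -(-n) by ring, zpow_neg, h2, inv_inv]
  · obtain ⟨x, hx⟩ := IsAlgClosed.exists_pow_nat_eq y (n := n.toNat) (by omega)
    have hx0 : x ≠ 0 := by
      intro h0; rw [h0, zero_pow (by omega)] at hx; exact hy hx.symm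
    refine ⟨x, hx0, ?_⟩
    rw [show n = (n.toNat : ℤ) by omega, zpow_natCast, hx]

lemma int_of_rat_mul {d : ℕ} {η : Fin d → ℤ} (hη : Primitive η) {a : Fin d → ℤ}
    {r : ℚ} (hr : ∀ k, (a k : ℚ) = r * (η k : ℚ)) : ∃ n : ℤ, a = n • η := by
  have key : ∀ k, a k * (r.den : ℤ) = r.num * η k := by
    intro k
    have h1 : (a k : ℚ) * (r.den : ℚ) = (r * (r.den : ℚ)) * (η k : ℚ) := by rw [hr k]; ring
    rw [Rat.mul_den_eq_num] at h1
    exact_mod_cast h1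
  have hcop : IsCoprime ((r.den : ℤ)) r.num := by
    rw [Int.isCoprime_iff_gcd_eq_one]
    simpa [Int.gcd] using r.reduced.symm
  have hdvd : ∀ k, (r.den : ℤ) ∣ η k := by
    intro k
    refine hcop.dvd_of_dvd_mul_left ⟨a k, ?_⟩
    rw [← key k]; ring
  have hunit : IsUnit ((r.den : ℤ)) := by
    refine hη.2 (r.den : ℤ) (fun k => η k / (r.den : ℤ)) (funext fun k => ?_)
    simp only [Pi.smul_apply, smul_eq_mul]
    exact (Int.mul_ediv_cancel' (hdvd k)).symm
  have hden : (r.den : ℤ) = 1 := by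
    rcases Int.isUnit_iff.mp hunit with h | h
    · exact h
    · exfalso; have := r.pos; omega
  refine ⟨r.num, funext fun k => ?_⟩
  have h2 := key k
  rw [hden, mul_one] at h2
  simpa [Pi.smul_apply, smul_eq_mul] using h2

lemma dotB_smul {d : ℕ} {J : Type*} (b : J → Fin d → ℤ) (η : Fin d → ℤ) {j : J} {n : ℤ}
    (h : b j = n • η) (v : Fin d → ℂ) :
    dotB b j v = (n : ℂ) * ∑ k, (η k : ℂ) * v k := by
  unfold dotB
  rw [Finset.mul_sum]
  refine Finset.sum_congr rfl fun k _ => ?_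
  rw [h]
  push_cast [Pi.smul_apply, smul_eq_mul]
  ring

lemma core_prod {d : ℕ} {J : Type*} [Fintype J] [DecidableEq J]
    (b : J → Fin d → ℤ) (η : Fin d → ℤ) (F : Finset J)
    (q : J → ℤ) (hbq : ∀ j ∈ F, b j = q j • η) (x : ℂ) (hx : x ≠ 0)
    (z : J → ℂ) (v : Fin d → ℂ)
    (hzF : ∀ j ∈ F, z j = (q j : ℂ) * x) (hzFc : ∀ j ∉ F, z j = dotB b j v) (k : Fin d) :
    phiB b z k = ((∏ j ∈ F, (q j : ℂ) ^ (q j)) * x ^ (∑ j ∈ F, q j)) ^ (η k) *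
      ∏ j ∈ Fᶜ, dotB b j v ^ (b j k) := by
  have split : phiB b z k = (∏ j ∈ F, z j ^ (b j k)) * ∏ j ∈ Fᶜ, z j ^ (b j k) :=
    (Finset.prod_mul_prod_compl F _).symm
  rw [split]
  congr 1
  · have hbk : ∀ j ∈ F, b j k = q j * η k := by
      intro j hj
      rw [hbq j hj]; simp [Pi.smul_apply, smul_eq_mul]
    calc ∏ j ∈ F, z j ^ (b j k)
        = ∏ j ∈ F, (((q j : ℂ) * x) ^ (q j)) ^ (η k) := by
          refine Finset.prod_congr rfl fun j hj => ?_
          rw [hzF j hj, hbk j hj, zpow_mul]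
      _ = (∏ j ∈ F, ((q j : ℂ) * x) ^ (q j)) ^ (η k) := (Finset.prod_zpow _ _ _)
      _ = ((∏ j ∈ F, (q j : ℂ) ^ (q j)) * x ^ (∑ j ∈ F, q j)) ^ (η k) := by
          rw [zpow_sum₀' hx, ← Finset.prod_mul_distrib]
          congr 1
          exact Finset.prod_congr rfl fun j _ => mul_zpow _ _ _
  · exact Finset.prod_congr rfl fun j hj => by rw [hzFc j (Finset.mem_compl.mp hj)]

lemma closure_image2_mul {d : ℕ} (T S : Set (Fin d → ℂ)) (hT : IsCompact T)
    (hS : IsCompact (closure S)) :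
    closure (Set.image2 (fun t w => t * w) T S) =
      Set.image2 (fun t w => t * w) T (closure S) := by
  apply Set.Subset.antisymm
  · refine closure_minimal (Set.image2_subset subset_rfl subset_closure) ?_
    rw [← Set.image_prod]
    exact ((hT.prod hS).image (continuous_fst.mul continuous_snd)).isClosed
  · rintro x ⟨t, ht, w, hw, rfl⟩
    have h1 : (fun y => t * y) '' closure S ⊆ closure ((fun y => t * y) '' S) :=
      image_closure_subset_closure_image (continuous_const.mul continuous_id)
    have h2 : (fun y => t * y) '' S ⊆ Set.image2 (fun t w => t * w) T S := by
      rintro _ ⟨s, hs, rfl⟩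
      exact Set.mem_image2_of_mem ht hs
    exact closure_mono h2 (h1 ⟨w, hw, rfl⟩)

lemma compact_T {d : ℕ} (η : Fin d → ℤ) :
    IsCompact {t : Fin d → ℂ | ∃ u : ℂ, ‖u‖ = 1 ∧ t = fun k => u ^ η k} := by
  have h : {t : Fin d → ℂ | ∃ u : ℂ, ‖u‖ = 1 ∧ t = fun k => u ^ η k} =
      (fun u => fun k => u ^ η k) '' (Metric.sphere (0 : ℂ) 1) := by
    ext t
    simp only [Set.mem_image, Set.mem_setOf_eq, mem_sphere_zero_iff_norm]
    constructor
    · rintro ⟨u, h1, rfl⟩; exact ⟨u, h1, rfl⟩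
    · rintro ⟨u, h1, rfl⟩; exact ⟨u, h1, rfl⟩
  rw [h]
  refine (isCompact_sphere 0 1).image_of_continuousOn ?_
  rw [continuousOn_pi]
  intro k u hu
  have hu0 : u ≠ 0 := by
    rw [mem_sphere_zero_iff_norm] at hu
    intro h0; rw [h0] at hu; simp at hu
  exact (continuousAt_zpow₀ u (η k) (Or.inl hu0)).continuousWithinAt

lemma compact_closure_of_torus {d : ℕ} (S : Set (Fin d → ℂ))
    (hS : ∀ z ∈ S, ∀ k, ‖z k‖ = 1) : IsCompact (closure S) := by
  have hK : IsCompact (Set.pi Set.univ fun _ : Fin d => Metric.sphere (0 : ℂ) 1) :=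
    isCompact_univ_pi fun _ => isCompact_sphere 0 1
  refine hK.of_isClosed_subset isClosed_closure (closure_minimal ?_ hK.isClosed)
  intro z hz
  rw [Set.mem_univ_pi]
  intro k
  rw [mem_sphere_zero_iff_norm]
  exact hS z hz k

/-- **Theorem 4.3, hyperplane case.** Let `b : J → ℤ^d` be nonzero vectors
spanning `ℝ^d` with `Σ_j b_j = 0`.  Let `η` be primitive with parallel class
`F = {j : b_j ∈ ℚ·η}` nonempty and `Σ_{j∈F} q_j ≠ 0` (where `b_j = q_j·η`), so the
hyperplane `H = {v : η·v = 0}` is non-splitting.  Then the stratum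
`𝒫∞_H(D_B) = cl(Arg(φ_B(ini_H ℋ^c_B)))` equals the prism
`𝕋_η · cl(Arg({ψ_H(v) : v ∈ H, b_j·v ≠ 0 ∀ j ∉ F}))` with fiber `𝕋_η` over the closed
coamoeba of the restricted discriminant `D_{B|H}`. -/
theorem stmt18 {d : ℕ} {J : Type*} [Fintype J] [DecidableEq J]
    (b : J → Fin d → ℤ) (hb0 : ∀ j, b j ≠ 0)
    (hspan : Submodule.span ℝ (Set.range fun j => fun k => (b j k : ℝ)) = ⊤)
    (hsum : ∑ j, b j = 0)
    (η : Fin d → ℤ) (hη : Primitive η)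
    (F : Finset J)
    (hF : ∀ j, j ∈ F ↔ ∃ q : ℚ, ∀ k, (b j k : ℚ) = q * (η k : ℚ))
    (hFne : F.Nonempty)
    (hq : ∀ q : J → ℤ, (∀ j ∈ F, b j = q j • η) → (∑ j ∈ F, q j) ≠ 0) :
    closure (ArgMap '' (phiB b '' iniL b F)) =
      Set.image2 (fun t w => t * w)
        {t : Fin d → ℂ | ∃ u : ℂ, ‖u‖ = 1 ∧ t = fun k => u ^ η k}
        (closure (ArgMap '' {z : Fin d → ℂ | ∃ v : Fin d → ℂ,
          (∑ k, (η k : ℂ) * v k) = 0 ∧ (∀ j ∉ F, dotB b j v ≠ 0) ∧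
          z = fun k => ∏ j ∈ Fᶜ, (dotB b j v) ^ (b j k)})) := by
  -- notation
  set T : Set (Fin d → ℂ) :=
    {t : Fin d → ℂ | ∃ u : ℂ, ‖u‖ = 1 ∧ t = fun k => u ^ η k} with hTdef
  set S : Set (Fin d → ℂ) := ArgMap '' {z : Fin d → ℂ | ∃ v : Fin d → ℂ,
      (∑ k, (η k : ℂ) * v k) = 0 ∧ (∀ j ∉ F, dotB b j v ≠ 0) ∧
      z = fun k => ∏ j ∈ Fᶜ, (dotB b j v) ^ (b j k)} with hSdef
  -- integer multiples
  have hex : ∀ j, ∃ n : ℤ, j ∈ F → b j = n • η := by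
    intro j
    by_cases hj : j ∈ F
    · obtain ⟨r, hr⟩ := (hF j).mp hj
      obtain ⟨n, hn⟩ := int_of_rat_mul hη hr
      exact ⟨n, fun _ => hn⟩
    · exact ⟨0, fun h => absurd h hj⟩
  choose q hq' using hex
  have hqne : ∀ j ∈ F, (q j : ℂ) ≠ 0 := by
    intro j hj
    simp only [ne_eq, Int.cast_eq_zero]
    intro h0
    exact hb0 j (by rw [hq' j hj, h0, zero_smul])
  have hQ : (∑ j ∈ F, q j) ≠ 0 := hq q hq'
  set C : ℂ := ∏ j ∈ F, (q j : ℂ) ^ (q j) with hCdef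
  have hC : C ≠ 0 := by
    rw [hCdef]
    exact Finset.prod_ne_zero_iff.mpr fun j hj => zpow_ne_zero _ (hqne j hj)
  -- torus property of S
  have hStorus : ∀ z ∈ S, ∀ k, ‖z k‖ = 1 := by
    rintro _ ⟨ψ, ⟨v, hηv, hvne, rfl⟩, rfl⟩ k
    rw [ArgMap_apply]
    refine abs_carg (Finset.prod_ne_zero_iff.mpr fun j hj => ?_)
    exact zpow_ne_zero _ (hvne j (Finset.mem_compl.mp hj))
  -- the main set-level identity
  have hE : ArgMap '' (phiB b '' iniL b F) = Set.image2 (fun t w => t * w) T S := by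
    apply Set.Subset.antisymm
    · rintro _ ⟨_, ⟨z, ⟨⟨v, hv⟩, ⟨w, hwF, hwFc⟩⟩, rfl⟩, rfl⟩
      obtain ⟨j0, hj0⟩ := hFne
      set x : ℂ := ∑ k, (η k : ℂ) * v k with hxdef
      have hzF : ∀ j ∈ F, z j = (q j : ℂ) * x := by
        intro j hj
        rw [(hv j hj).1, dotB_smul b η (hq' j hj)]
      have hx : x ≠ 0 := by
        have h1 := (hv j0 hj0).2
        rw [dotB_smul b η (hq' j0 hj0)] at h1
        exact fun h0 => h1 (by rw [← hxdef, h0, mul_zero])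
      have hηw : (∑ k, (η k : ℂ) * w k) = 0 := by
        have h1 := hwF j0 hj0
        rw [dotB_smul b η (hq' j0 hj0)] at h1
        rcases mul_eq_zero.mp h1 with h | h
        · exact absurd h (hqne j0 hj0)
        · exact h
      have hzFc : ∀ j ∉ F, z j = dotB b j w := fun j hj => (hwFc j hj).1
      have hCx : C * x ^ (∑ j ∈ F, q j) ≠ 0 := mul_ne_zero hC (zpow_ne_zero _ hx)
      have key : ArgMap (phiB b z) =
          (fun k => carg (C * x ^ (∑ j ∈ F, q j)) ^ η k) *
            ArgMap (fun k => ∏ j ∈ Fᶜ, dotB b j w ^ (b j k)) := by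
        funext k
        rw [Pi.mul_apply, ArgMap_apply, ArgMap_apply,
          core_prod b η F q hq' x hx z w hzF hzFc k, carg_mul, carg_zpow]
      rw [key]
      refine Set.mem_image2_of_mem ⟨carg (C * x ^ (∑ j ∈ F, q j)), abs_carg hCx, rfl⟩ ?_
      exact ⟨_, ⟨w, hηw, fun j hj => (hwFc j hj).2, rfl⟩, rfl⟩
    · rintro _ ⟨t, ⟨u, hu, rfl⟩, _, ⟨ψ, ⟨v, hηv, hvne, rfl⟩, rfl⟩, rfl⟩
      have hu0 : u ≠ 0 := fun h0 => by rw [h0] at hu; simp at hu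
      obtain ⟨x, hx, hxQ⟩ := exists_zpow_eq' (div_ne_zero hu0 hC) hQ
      have hCx : C * x ^ (∑ j ∈ F, q j) = u := by
        rw [hxQ]; field_simp
      obtain ⟨k0, hk0⟩ := Function.ne_iff.mp hη.1
      have hk0' : (η k0 : ℂ) ≠ 0 := by exact_mod_cast hk0
      set v' : Fin d → ℂ := fun k => if k = k0 then x / (η k0 : ℂ) else 0 with hv'def
      have hv'sum : (∑ k, (η k : ℂ) * v' k) = x := by
        rw [Finset.sum_eq_single k0]
        · rw [hv'def]; simp [hk0']
          field_simp
        · intro k _ hk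
          rw [hv'def]; simp [hk]
        · intro h; exact absurd (Finset.mem_univ k0) h
      set z : J → ℂ := fun j => if j ∈ F then (q j : ℂ) * x else dotB b j v with hzdef
      have hzF : ∀ j ∈ F, z j = (q j : ℂ) * x := fun j hj => by rw [hzdef]; simp [hj]
      have hzFc : ∀ j ∉ F, z j = dotB b j v := fun j hj => by rw [hzdef]; simp [hj]
      have hzin : z ∈ iniL b F := by
        constructor
        · refine ⟨v', fun j hj => ?_⟩
          have hd : dotB b j v' = (q j : ℂ) * x := by
            rw [dotB_smul b η (hq' j hj), hv'sum]
          exact ⟨by rw [hzF j hj, hd], by rw [hd]; exact mul_ne_zero (hqne j hj) hx⟩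
        · refine ⟨v, fun j hj => ?_, fun j hj => ⟨hzFc j hj, hvne j hj⟩⟩
          rw [dotB_smul b η (hq' j hj), hηv, mul_zero]
      have key : ArgMap (phiB b z) =
          (fun k => u ^ η k) * ArgMap (fun k => ∏ j ∈ Fᶜ, dotB b j v ^ (b j k)) := by
        funext k
        rw [Pi.mul_apply, ArgMap_apply, ArgMap_apply,
          core_prod b η F q hq' x hx z v hzF hzFc k, carg_mul, carg_zpow, hCx,
          carg_of_abs_one hu]
      exact ⟨phiB b z, ⟨z, hzin, rfl⟩, key⟩
  rw [hE, closure_image2_mul T S (compact_T η) (compact_closure_of_torus S hStorus)]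
end
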